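/- Let Z, R be types, m a natural number and δ ≥ 0 (δ : ℝ≥0∞, δ ≤ 1). Suppose B : Z → PMF R satisfies, for every e, e' : Z and every set T ⊆ R, P[B e ∈ T] ≤ P[B e' ∈ T] + δ (i.e., B is a (0, δ)-max-KL stable single-element mechanism). Define the m-fold independent composition C : (Fin m → Z) → PMF (Fin m → R) that applies B independently to each coordinate (constructed by iterated bind of the PMFs B (s i)). Then C is (0, δ)-max-KL stable: for every s, s' : Fin m → Z differing in exactly one coordinate and every set T ⊆ (Fin m → R), P[C s ∈ T] ≤ P[C s' ∈ T] + δ. -/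
import Mathlib


open ENNReal

/-- Two inputs are neighboring if they differ in exactly one coordinate. -/
def Neighboring {Z : Type*} {m : ℕ} (s s' : Fin m → Z) : Prop :=
  ∃ i : Fin m, (∀ j : Fin m, j ≠ i → s j = s' j) ∧ s i ≠ s' i

/-- The product of finitely many PMFs, constructed by iterated bind. -/
noncomputable def PMF.piFin {R : Type*} : (m : ℕ) → (Fin m → PMF R) → PMF (Fin m → R)
  | 0, _ => PMF.pure (fun i => i.elim0)
  | m + 1, p => (p 0).bind fun r => (PMF.piFin m (fun i => p i.succ)).map (Fin.cons r)

/-- The m-fold independent composition of a mechanism on single elements. -/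
noncomputable def composed {Z R : Type*} (m : ℕ) (B : Z → PMF R) :
    (Fin m → Z) → PMF (Fin m → R) :=
  fun s => PMF.piFin m (fun i => B (s i))

lemma pmf_om_le_one {α : Type*} (p : PMF α) (s : Set α) : p.toOuterMeasure s ≤ 1 := by
  rw [p.toOuterMeasure_apply]
  calc ∑' x, s.indicator p x ≤ ∑' x, p x :=
        ENNReal.tsum_le_tsum (fun x => Set.indicator_le_self _ _ _)
    _ = 1 := p.tsum_coe

lemma tsum_sub_le_delta {R : Type*} (p p' : PMF R) (δ : ℝ≥0∞)
    (h : ∀ T : Set R, p.toOuterMeasure T ≤ p'.toOuterMeasure T + δ) :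
    ∑' a, (p a - p' a) ≤ δ := by
  set T₀ : Set R := {a | p' a < p a} with hT₀
  have hpt : ∀ a, p a - p' a = T₀.indicator p a - T₀.indicator p' a := by
    intro a
    by_cases ha : a ∈ T₀
    · simp [Set.indicator_of_mem ha]
    · simp only [Set.indicator_of_notMem ha]
      simp only [T₀, Set.mem_setOf_eq, not_lt] at ha
      simp [tsub_eq_zero_of_le ha]
  have hle : ∀ a, T₀.indicator p' a ≤ T₀.indicator p a := by
    intro a
    by_cases ha : a ∈ T₀
    · simp only [Set.indicator_of_mem ha]
      exact le_of_lt ha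
    · simp [Set.indicator_of_notMem ha]
  have hfin : ∑' a, T₀.indicator p' a ≠ ∞ := by
    rw [← PMF.toOuterMeasure_apply]
    exact ((pmf_om_le_one p' T₀).trans_lt one_lt_top).ne
  have key : (∑' a, (p a - p' a)) + ∑' a, T₀.indicator p' a = ∑' a, T₀.indicator p a := by
    rw [← ENNReal.tsum_add]
    refine tsum_congr fun a => ?_
    rw [hpt a, tsub_add_cancel_of_le (hle a)]
  have h0 := h T₀
  rw [p.toOuterMeasure_apply, p'.toOuterMeasure_apply] at h0
  have : (∑' a, (p a - p' a)) + ∑' a, T₀.indicator p' a ≤ δ + ∑' a, T₀.indicator p' a := by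
    rw [key, add_comm δ]
    exact h0
  exact (ENNReal.add_le_add_iff_right hfin).mp this

lemma bind_stable_left {R S : Type*} (p p' : PMF R) (f : R → PMF S) (δ : ℝ≥0∞)
    (h : ∀ T : Set R, p.toOuterMeasure T ≤ p'.toOuterMeasure T + δ) (T : Set S) :
    (p.bind f).toOuterMeasure T ≤ (p'.bind f).toOuterMeasure T + δ := by
  rw [PMF.toOuterMeasure_bind_apply, PMF.toOuterMeasure_bind_apply]
  have step : ∀ a, p a * (f a).toOuterMeasure T ≤
      p' a * (f a).toOuterMeasure T + (p a - p' a) := by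
    intro a
    calc p a * (f a).toOuterMeasure T
        ≤ (p' a + (p a - p' a)) * (f a).toOuterMeasure T :=
          mul_le_mul_left le_add_tsub _
      _ = p' a * (f a).toOuterMeasure T + (p a - p' a) * (f a).toOuterMeasure T := by
          rw [add_mul]
      _ ≤ p' a * (f a).toOuterMeasure T + (p a - p' a) := by
          gcongr
          exact mul_le_of_le_one_right' (pmf_om_le_one (f a) T)
  calc ∑' a, p a * (f a).toOuterMeasure T
      ≤ ∑' a, (p' a * (f a).toOuterMeasure T + (p a - p' a)) :=
        ENNReal.tsum_le_tsum step
    _ = (∑' a, p' a * (f a).toOuterMeasure T) + ∑' a, (p a - p' a) := ENNReal.tsum_add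
    _ ≤ (∑' a, p' a * (f a).toOuterMeasure T) + δ := by
        gcongr
        exact tsum_sub_le_delta p p' δ h

lemma bind_stable_right {R S : Type*} (p : PMF R) (f f' : R → PMF S) (δ : ℝ≥0∞)
    (h : ∀ a, ∀ T : Set S, (f a).toOuterMeasure T ≤ (f' a).toOuterMeasure T + δ)
    (T : Set S) :
    (p.bind f).toOuterMeasure T ≤ (p.bind f').toOuterMeasure T + δ := by
  rw [PMF.toOuterMeasure_bind_apply, PMF.toOuterMeasure_bind_apply]
  calc ∑' a, p a * (f a).toOuterMeasure T
      ≤ ∑' a, (p a * (f' a).toOuterMeasure T + p a * δ) := by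
        refine ENNReal.tsum_le_tsum fun a => ?_
        rw [← mul_add]
        exact mul_le_mul_right (h a T) _
    _ = (∑' a, p a * (f' a).toOuterMeasure T) + ∑' a, p a * δ := ENNReal.tsum_add
    _ ≤ (∑' a, p a * (f' a).toOuterMeasure T) + δ := by
        gcongr
        rw [ENNReal.tsum_mul_right, p.tsum_coe, one_mul]

/-- Independent composition of a (0, δ)-max-KL stable single-element mechanism on
disjoint databases is (0, δ)-max-KL stable. -/
theorem composed_maxKL_stable {Z R : Type*} (m : ℕ) (δ : ℝ≥0∞) (hδ : δ ≤ 1)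
    (B : Z → PMF R)
    (hB : ∀ e e' : Z, ∀ T : Set R,
      (B e).toOuterMeasure T ≤ (B e').toOuterMeasure T + δ) :
    ∀ s s' : Fin m → Z, Neighboring s s' → ∀ T : Set (Fin m → R),
      (composed m B s).toOuterMeasure T ≤ (composed m B s').toOuterMeasure T + δ := by
  induction m with
  | zero => rintro s s' ⟨i, _⟩; exact i.elim0
  | succ m ih =>
    rintro s s' ⟨i, hoff, hi⟩ T
    simp only [composed, PMF.piFin]
    rcases Fin.eq_zero_or_eq_succ i with hi0 | ⟨j, rfl⟩
    · subst hi0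
      have htail : (fun k : Fin m => B (s k.succ)) = fun k => B (s' k.succ) := by
        funext k
        rw [hoff k.succ (Fin.succ_ne_zero k)]
      rw [htail]
      exact bind_stable_left _ _ _ δ (hB (s 0) (s' 0)) T
    · have h0 : s 0 = s' 0 := hoff 0 (by simp [Fin.ext_iff])
      rw [h0]
      refine bind_stable_right _ _ _ δ (fun r U => ?_) T
      rw [PMF.toOuterMeasure_map_apply, PMF.toOuterMeasure_map_apply]
      refine ih (fun k => s k.succ) (fun k => s' k.succ) ⟨j, fun k hk => ?_, hi⟩ _
      exact hoff k.succ (by simpa [Fin.ext_iff] using hk)
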